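/- Let ψ : ℝ² → ℝ be real-analytic, 1-periodic in each variable, and satisfy the factorisation hypothesis (FH). Suppose that at a point (x,y) ∈ ℝ² there exist integers m,n ≥ 2 such that ∂^m_tψ(x,y) ≠ 0, ∂^n_sψ(x,y) ≠ 0, ∂^k_sψ(x,y) = 0 for all 2 ≤ k < n, and ∂^ℓ_tψ(x,y) = 0 for all 2 ≤ ℓ < m. Fix an integer r ≥ 0 with m + r < n, and let L be any real-analytic function on a neighbourhood of (x,y) satisfying ∂^{1,1}ψ = L·∂²_tψ on that neighbourhood. Then ∂^{k,ℓ}L(x,y) = 0 for all integers k,ℓ ≥ 0 with k+ℓ ≤ r. -/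

import Mathlib

open MeasureTheory Filter

/-- mixed partial derivative ∂^{k,ℓ}ψ = ∂^{k+ℓ}ψ/∂s^k∂t^ℓ. -/
noncomputable def pd (ψ : ℝ → ℝ → ℝ) (k l : ℕ) (s t : ℝ) : ℝ :=
  iteratedDeriv k (fun s' => iteratedDeriv l (ψ s') t) s

/-- The factorisation hypothesis (FH) for a scalar function ψ on ℝ². -/
def FH1 (ψ : ℝ → ℝ → ℝ) : Prop :=
  ∀ p : ℝ × ℝ, ∃ U : Set (ℝ × ℝ), IsOpen U ∧ p ∈ U ∧
    ∃ K L : ℝ × ℝ → ℝ,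
      (∀ q ∈ U, AnalyticAt ℝ K q) ∧ (∀ q ∈ U, AnalyticAt ℝ L q) ∧
      ∀ q ∈ U, pd ψ 1 1 q.1 q.2 = K q * pd ψ 2 0 q.1 q.2 ∧
               pd ψ 1 1 q.1 q.2 = L q * pd ψ 0 2 q.1 q.2

/-!
Everything is read off from the Leibniz rule for `∂^{k,ℓ}` at `(x, y)` together with the
symmetry of mixed partials of the analytic `ψ`. Expanding `∂^{i,j}(K ψ_ss) = ∂^{i+1,j+1}ψ` and
inducting on `j` shows that every mixed derivative `∂^{i+1,j+1}ψ(x, y)` of order `< n` vanishes,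
because the pure `s`-derivatives of orders `2, …, n - 1` do. Writing `m = e + 2`, the derivative
`∂^{k,l+e}(L ψ_tt)(x, y) = ∂^{k+1,l+e+1}ψ(x, y)` is therefore zero, while in its Leibniz expansion
every term other than `C(l + e, l) ∂^{k,l}L · ∂^m_tψ` vanishes: either the factor `∂^{a,b}L` has
order `< k + l` (induction on `k + l`), or the factor of `ψ_tt` is a mixed derivative of order
`≤ m < n` or a pure `t`-derivative of order `< m`. Hence `∂^{k,l}L(x, y) = 0`.
-/

open Function Finset Topology

section DirDeriv

variable {E : Type*} [NormedAddCommGroup E] [NormedSpace ℝ E]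

noncomputable def dirDeriv (v : E) (F : E → ℝ) : E → ℝ := fun q => fderiv ℝ F q v

variable {F G : E → ℝ} {q v : E}

theorem AnalyticAt.dirDeriv (hF : AnalyticAt ℝ F q) (v : E) :
    AnalyticAt ℝ (_root_.dirDeriv v F) q :=
  ((ContinuousLinearMap.apply ℝ ℝ v).analyticAt _).comp hF.fderiv

theorem AnalyticAt.iterate_dirDeriv (hF : AnalyticAt ℝ F q) (v : E) (n : ℕ) :
    AnalyticAt ℝ ((_root_.dirDeriv v)^[n] F) q := by
  induction n with
  | zero => exact hF
  | succ n ih => rw [iterate_succ_apply']; exact ih.dirDeriv v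

theorem Filter.EventuallyEq.iterate_dirDeriv (h : F =ᶠ[𝓝 q] G) (v : E) (n : ℕ) :
    (dirDeriv v)^[n] F =ᶠ[𝓝 q] (dirDeriv v)^[n] G := by
  induction n with
  | zero => exact h
  | succ n ih =>
    simp only [iterate_succ_apply']
    exact (ih.fderiv (𝕜 := ℝ)).mono fun q' hq' => by simp only [dirDeriv, hq']

theorem dirDeriv_comm (hF : AnalyticAt ℝ F q) (v w : E) :
    dirDeriv v (dirDeriv w F) q = dirDeriv w (dirDeriv v F) q := by
  have hF' := hF.fderiv.differentiableAt
  have hsymm : IsSymmSndFDerivAt ℝ F q := (hF.contDiffAt (n := 2)).isSymmSndFDerivAt (by simp)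
  have hlin (u : E) :
      fderiv ℝ (fun y => fderiv ℝ F y u) q = (fderiv ℝ (fderiv ℝ F) q).flip u := by
    simpa using fderiv_clm_apply (u := fun _ => u) hF' (differentiableAt_const u)
  change fderiv ℝ (fun y => fderiv ℝ F y w) q v = fderiv ℝ (fun y => fderiv ℝ F y v) q w
  rw [hlin, hlin]
  exact hsymm.eq v w

theorem iterate_dirDeriv_comm (hF : AnalyticAt ℝ F q) (v w : E) (n : ℕ) :
    (dirDeriv v)^[n] (dirDeriv w F) =ᶠ[𝓝 q] dirDeriv w ((dirDeriv v)^[n] F) := by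
  induction n generalizing F with
  | zero => rfl
  | succ n ih =>
    have hcomm : dirDeriv v (dirDeriv w F) =ᶠ[𝓝 q] dirDeriv w (dirDeriv v F) :=
      hF.eventually_analyticAt.mono fun _ h => dirDeriv_comm h v w
    simp only [iterate_succ_apply]
    exact (hcomm.iterate_dirDeriv v n).trans (ih (hF.dirDeriv v))

theorem iterate_dirDeriv_iterate_comm (hF : AnalyticAt ℝ F q) (v w : E) (j a : ℕ) :
    (dirDeriv v)^[j] ((dirDeriv w)^[a] F) =ᶠ[𝓝 q] (dirDeriv w)^[a] ((dirDeriv v)^[j] F) := by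
  induction a generalizing F with
  | zero => rfl
  | succ a ih =>
    simp only [iterate_succ_apply]
    exact (ih (hF.dirDeriv w)).trans ((iterate_dirDeriv_comm hF v w j).iterate_dirDeriv w a)

theorem iterate_dirDeriv_apply_add_smul {a : E} {t : ℝ} (hF : AnalyticAt ℝ F (a + t • v))
    (n : ℕ) : (dirDeriv v)^[n] F (a + t • v) = iteratedDeriv n (fun τ => F (a + τ • v)) t := by
  induction n generalizing F with
  | zero => simp
  | succ n ih =>
    have hline : ∀ τ : ℝ, HasDerivAt (fun τ : ℝ => a + τ • v) v τ := fun τ => by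
      simpa using ((hasDerivAt_id τ).smul_const v).const_add a
    have hderiv :
        (fun τ => dirDeriv v F (a + τ • v)) =ᶠ[𝓝 t] deriv (fun τ => F (a + τ • v)) :=
      ((hline t).continuousAt.eventually hF.eventually_analyticAt).mono fun τ hτ =>
        ((hτ.differentiableAt.hasFDerivAt.comp_hasDerivAt τ (hline τ)).deriv).symm
    rw [iterate_succ_apply, ih (hF.dirDeriv v), hderiv.iteratedDeriv_eq, iteratedDeriv_succ']

end DirDeriv

section Plane

noncomputable def mixedDeriv (k l : ℕ) (F : ℝ × ℝ → ℝ) : ℝ × ℝ → ℝ :=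
  (dirDeriv (1, 0))^[k] ((dirDeriv (0, 1))^[l] F)

variable {F : ℝ × ℝ → ℝ} {f g : ℝ → ℝ → ℝ} {s t : ℝ} {p : ℝ × ℝ}

theorem AnalyticAt.mixedDeriv (hF : AnalyticAt ℝ F p) (k l : ℕ) :
    AnalyticAt ℝ (_root_.mixedDeriv k l F) p :=
  (hF.iterate_dirDeriv _ l).iterate_dirDeriv _ k

theorem mixedDeriv_mixedDeriv (hF : AnalyticAt ℝ F p) (i j a b : ℕ) :
    mixedDeriv i j (mixedDeriv a b F) p = mixedDeriv (i + a) (j + b) F p := by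
  have hcomm := iterate_dirDeriv_iterate_comm (hF.iterate_dirDeriv (0, 1) b) (0, 1) (1, 0) j a
  simp only [mixedDeriv, iterate_add_apply]
  exact (hcomm.iterate_dirDeriv (1, 0) i).eq_of_nhds

theorem iterate_dirDeriv_fst_apply (hF : AnalyticAt ℝ F (s, t)) (n : ℕ) :
    (dirDeriv (1, 0))^[n] F (s, t) = iteratedDeriv n (fun s' => F (s', t)) s := by
  simpa using iterate_dirDeriv_apply_add_smul (a := (0, t)) (v := ((1 : ℝ), (0 : ℝ)))
    (by simpa using hF) n

theorem iterate_dirDeriv_snd_apply (hF : AnalyticAt ℝ F (s, t)) (n : ℕ) :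
    (dirDeriv (0, 1))^[n] F (s, t) = iteratedDeriv n (fun t' => F (s, t')) t := by
  simpa using iterate_dirDeriv_apply_add_smul (a := (s, 0)) (v := ((0 : ℝ), (1 : ℝ)))
    (by simpa using hF) n

theorem pd_eq_mixedDeriv (hf : AnalyticAt ℝ (uncurry f) (s, t)) (k l : ℕ) :
    pd f k l s t = mixedDeriv k l (uncurry f) (s, t) := by
  have hslice : (fun s' => iteratedDeriv l (f s') t) =ᶠ[𝓝 s]
      fun s' => (dirDeriv (0, 1))^[l] (uncurry f) (s', t) :=
    hf.eventually_analyticAt.curry_nhds.mono fun s' h =>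
      (iterate_dirDeriv_snd_apply h.self_of_nhds l).symm
  rw [pd, hslice.iteratedDeriv_eq, mixedDeriv,
    iterate_dirDeriv_fst_apply (hf.iterate_dirDeriv _ l) k]

theorem pd_eventuallyEq_mixedDeriv (hf : AnalyticAt ℝ (uncurry f) p) (k l : ℕ) :
    uncurry (pd f k l) =ᶠ[𝓝 p] mixedDeriv k l (uncurry f) :=
  hf.eventually_analyticAt.mono fun _ hq => pd_eq_mixedDeriv hq k l

theorem AnalyticAt.uncurry_pd (hf : AnalyticAt ℝ (uncurry f) p) (k l : ℕ) :
    AnalyticAt ℝ (uncurry (pd f k l)) p :=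
  (hf.mixedDeriv k l).congr (pd_eventuallyEq_mixedDeriv hf k l).symm

theorem pd_congr (h : uncurry f =ᶠ[𝓝 (s, t)] uncurry g) (k l : ℕ) :
    pd f k l s t = pd g k l s t := by
  apply Filter.EventuallyEq.iteratedDeriv_eq
  exact h.curry_nhds.mono fun _ h' => Filter.EventuallyEq.iteratedDeriv_eq l h'

theorem pd_pd (hf : AnalyticAt ℝ (uncurry f) (s, t)) (i j a b : ℕ) :
    pd (pd f a b) i j s t = pd f (i + a) (j + b) s t := by
  rw [pd_congr (g := curry (mixedDeriv a b (uncurry f))) (pd_eventuallyEq_mixedDeriv hf a b),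
    pd_eq_mixedDeriv (by simpa using hf.mixedDeriv a b), uncurry_curry,
    mixedDeriv_mixedDeriv hf, pd_eq_mixedDeriv hf]

theorem pd_mul (hf : AnalyticAt ℝ (uncurry f) (s, t)) (hg : AnalyticAt ℝ (uncurry g) (s, t))
    (k l : ℕ) :
    pd (fun s t => f s t * g s t) k l s t = ∑ ij ∈ range (k + 1) ×ˢ range (l + 1),
      (k.choose ij.1 * l.choose ij.2 : ℝ) *
        (pd f ij.1 ij.2 s t * pd g (k - ij.1) (l - ij.2) s t) := by
  have hslice : ∀ {h : ℝ → ℝ → ℝ}, AnalyticAt ℝ (uncurry h) (s, t) → ∀ j,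
      AnalyticAt ℝ (fun s' => iteratedDeriv j (h s') t) s := fun hh j => by
    simpa [pd] using (hh.uncurry_pd 0 j).curry_left
  have hinner : (fun s' => iteratedDeriv l (fun t' => f s' t' * g s' t') t) =ᶠ[𝓝 s]
      fun s' => ∑ j ∈ range (l + 1),
        (l.choose j : ℝ) * (iteratedDeriv j (f s') t * iteratedDeriv (l - j) (g s') t) :=
    (hf.eventually_analyticAt.and hg.eventually_analyticAt).curry_nhds.mono fun s' h => by
      obtain ⟨hf', hg'⟩ := h.self_of_nhds
      simp only [iteratedDeriv_fun_mul (f := f s') (g := g s') hf'.curry_right.contDiffAt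
        hg'.curry_right.contDiffAt, mul_assoc]
  have hterm : ∀ j, AnalyticAt ℝ
      (fun s' => iteratedDeriv j (f s') t * iteratedDeriv (l - j) (g s') t) s :=
    fun j => (hslice hf j).mul (hslice hg _)
  rw [pd, hinner.iteratedDeriv_eq,
    iteratedDeriv_fun_sum (f := fun j s' => (l.choose j : ℝ) *
      (iteratedDeriv j (f s') t * iteratedDeriv (l - j) (g s') t))
      fun j _ => (analyticAt_const.mul (hterm j)).contDiffAt,
    sum_product_right]
  refine sum_congr rfl fun j _ => ?_
  rw [iteratedDeriv_const_mul _ (hterm j).contDiffAt,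
    iteratedDeriv_fun_mul (hslice hf j).contDiffAt (hslice hg _).contDiffAt, mul_sum]
  refine sum_congr rfl fun i _ => ?_
  simp only [pd]
  ring

end Plane

section Factorisation

variable {ψ K : ℝ → ℝ → ℝ} {x y : ℝ} {m n : ℕ}

theorem pd_succ_succ_eq_zero_of_factor_ss (hψ : AnalyticAt ℝ (uncurry ψ) (x, y))
    (hK : AnalyticAt ℝ (uncurry K) (x, y))
    (hfac : ∀ᶠ q in 𝓝 (x, y), pd ψ 1 1 q.1 q.2 = K q.1 q.2 * pd ψ 2 0 q.1 q.2)
    (hs : ∀ k, 2 ≤ k → k < n → pd ψ k 0 x y = 0) (i j : ℕ) (hij : i + j + 2 < n) :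
    pd ψ (i + 1) (j + 1) x y = 0 := by
  induction j using Nat.strong_induction_on generalizing i with
  | _ j ih =>
  rw [← pd_pd hψ, pd_congr (f := pd ψ 1 1) (g := fun s t => K s t * pd ψ 2 0 s t) hfac,
    pd_mul hK (hψ.uncurry_pd 2 0)]
  refine sum_eq_zero ?_
  rintro ⟨a, b⟩ hab
  obtain ⟨ha, hb⟩ : a < i + 1 ∧ b < j + 1 := by simpa using hab
  have hvanish : pd ψ (i - a + 2) (j - b + 0) x y = 0 := by
    cases h : j - b with
    | zero => exact hs _ (by omega) (by omega)
    | succ c =>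
      rw [show i - a + 2 = (i - a + 1) + 1 by omega]
      exact ih c (by omega) _ (by omega)
  rw [pd_pd hψ, hvanish, mul_zero, mul_zero]

theorem pd_eq_zero_of_factor_tt (hm : 2 ≤ m) (hψ : AnalyticAt ℝ (uncurry ψ) (x, y))
    (hK : AnalyticAt ℝ (uncurry K) (x, y))
    (hfac : ∀ᶠ q in 𝓝 (x, y), pd ψ 1 1 q.1 q.2 = K q.1 q.2 * pd ψ 0 2 q.1 q.2)
    (hmixed : ∀ i j, i + j + 2 < n → pd ψ (i + 1) (j + 1) x y = 0)
    (ht : ∀ l, 2 ≤ l → l < m → pd ψ 0 l x y = 0) (hmt : pd ψ 0 m x y ≠ 0) :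
    ∀ k l, k + l + m < n → pd K k l x y = 0 := by
  obtain ⟨e, rfl⟩ : ∃ e, m = e + 2 := ⟨m - 2, by omega⟩
  suffices ∀ d k l, k + l = d → k + l + (e + 2) < n → pd K k l x y = 0 from
    fun k l => this _ k l rfl
  intro d
  induction d using Nat.strong_induction_on with
  | _ d ih =>
  rintro k l rfl hkl
  have hprod : pd (fun s t => K s t * pd ψ 0 2 s t) k (l + e) x y = 0 := by
    rw [← pd_congr (f := pd ψ 1 1) (g := fun s t => K s t * pd ψ 0 2 s t) hfac, pd_pd hψ]
    exact hmixed k (l + e) (by omega)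
  rw [pd_mul hK (hψ.uncurry_pd 0 2), sum_eq_single (k, l)] at hprod
  · have hdiag : ((l + e).choose l : ℝ) * (pd K k l x y * pd ψ 0 (e + 2) x y) = 0 := by
      simpa [pd_pd hψ] using hprod
    simpa [hmt, Nat.choose_eq_zero_iff] using hdiag
  · rintro ⟨a, b⟩ hab hne
    obtain ⟨ha, hb⟩ : a < k + 1 ∧ b < l + e + 1 := by simpa using hab
    by_cases hlow : a + b < k + l
    · rw [ih _ hlow a b rfl (by omega), zero_mul, mul_zero]
    have hvanish : pd ψ (k - a + 0) (l + e - b + 2) x y = 0 := by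
      rcases Nat.lt_or_ge a k with hak | hak
      · rw [show k - a + 0 = (k - a - 1) + 1 by omega]
        exact hmixed _ _ (by omega)
      · obtain rfl : a = k := by omega
        have hbl : b ≠ l := fun h => hne (by rw [h])
        rw [Nat.sub_self]
        exact ht _ (by omega) (by omega)
    rw [pd_pd hψ, hvanish, mul_zero, mul_zero]
  · intro h
    exact absurd (mem_product.2 ⟨mem_range.2 (by omega), mem_range.2 (by omega)⟩) h

end Factorisation

theorem stmt9_general (ψ : ℝ → ℝ → ℝ)
    (hψa : ∀ p : ℝ × ℝ, AnalyticAt ℝ (fun q : ℝ × ℝ => ψ q.1 q.2) p)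
    (hFH : FH1 ψ)
    (x y : ℝ) (m n : ℕ) (hm : 2 ≤ m)
    (hmt : pd ψ 0 m x y ≠ 0)
    (hs : ∀ k : ℕ, 2 ≤ k → k < n → pd ψ k 0 x y = 0)
    (ht : ∀ l : ℕ, 2 ≤ l → l < m → pd ψ 0 l x y = 0)
    (r : ℕ) (hr : m + r < n)
    (L : ℝ → ℝ → ℝ) (V : Set (ℝ × ℝ)) (hV : IsOpen V) (hxyV : (x, y) ∈ V)
    (hLa : ∀ q ∈ V, AnalyticAt ℝ (fun q' : ℝ × ℝ => L q'.1 q'.2) q)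
    (hLfac : ∀ q ∈ V, pd ψ 1 1 q.1 q.2 = L q.1 q.2 * pd ψ 0 2 q.1 q.2) :
    ∀ k l : ℕ, k + l ≤ r → pd L k l x y = 0 := by
  obtain ⟨U, hU, hxyU, K, _, hK, _, hKfac⟩ := hFH (x, y)
  have hmixed := pd_succ_succ_eq_zero_of_factor_ss (K := fun s t => K (s, t)) (hψa (x, y))
    (hK _ hxyU) (eventually_of_mem (hU.mem_nhds hxyU) fun q hq => (hKfac q hq).1) hs
  intro k l hkl
  exact pd_eq_zero_of_factor_tt hm (hψa (x, y)) (hLa _ hxyV)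
    (eventually_of_mem (hV.mem_nhds hxyV) hLfac) hmixed ht hmt k l (by omega)

/-- Key proposition: under (FH), with ∂^m_tψ(x,y) ≠ 0, ∂^n_sψ(x,y) ≠ 0, vanishing lower
pure derivatives, and m + r < n, every factor L with ∂^{1,1}ψ = L·∂²_tψ near (x,y) has
all its derivatives of order ≤ r vanishing at (x,y). -/
theorem stmt9 (ψ : ℝ → ℝ → ℝ)
    (hψa : ∀ p : ℝ × ℝ, AnalyticAt ℝ (fun q : ℝ × ℝ => ψ q.1 q.2) p)
    (hp1 : ∀ s t : ℝ, ψ (s + 1) t = ψ s t)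
    (hp2 : ∀ s t : ℝ, ψ s (t + 1) = ψ s t)
    (hFH : FH1 ψ)
    (x y : ℝ) (m n : ℕ) (hm : 2 ≤ m) (hn : 2 ≤ n)
    (hmt : pd ψ 0 m x y ≠ 0) (hns : pd ψ n 0 x y ≠ 0)
    (hs : ∀ k : ℕ, 2 ≤ k → k < n → pd ψ k 0 x y = 0)
    (ht : ∀ l : ℕ, 2 ≤ l → l < m → pd ψ 0 l x y = 0)
    (r : ℕ) (hr : m + r < n)
    (L : ℝ → ℝ → ℝ) (V : Set (ℝ × ℝ)) (hV : IsOpen V) (hxyV : (x, y) ∈ V)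
    (hLa : ∀ q ∈ V, AnalyticAt ℝ (fun q' : ℝ × ℝ => L q'.1 q'.2) q)
    (hLfac : ∀ q ∈ V, pd ψ 1 1 q.1 q.2 = L q.1 q.2 * pd ψ 0 2 q.1 q.2) :
    ∀ k l : ℕ, k + l ≤ r → pd L k l x y = 0 :=
  stmt9_general ψ hψa hFH x y m n hm hmt hs ht r hr L V hV hxyV hLa hLfac
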